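/- Let e₁ = (1,0,0), e₂ = (0,1,0), e₃ = (0,0,1), e₄ = (1,1,1) ∈ ℝ³. Then the linear span of the face F_{S₄} := {f ∈ P : f(e₁) = f(e₂) = f(e₃) = f(e₄) = 0} equals I_{S₄} := {f ∈ H₄ : f(eᵢ) = 0 and ∇f(eᵢ) = 0 for i = 1, 2, 3, 4}, and this space has dimension 3. -/
import Mathlib

open MvPolynomial

noncomputable section

/-- The space of ternary (3-variable) real polynomials. `H d` corresponds to the
homogeneous polynomials of degree `d` via the predicate `IsHomogeneous`. -/
abbrev MvP : Type := MvPolynomial (Fin 3) ℝ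

/-- The cone `P` of nonnegative ternary quartics. -/
def Pcone : Set MvP :=
  {f | f.IsHomogeneous 4 ∧ ∀ a : Fin 3 → ℝ, 0 ≤ eval a f}

/-- `F` is a face of the cone `P`. -/
def IsFace (F : Set MvP) : Prop :=
  F ⊆ Pcone ∧
  (∀ a ∈ F, ∀ b ∈ F, a + b ∈ F) ∧
  (∀ c : ℝ, 0 ≤ c → ∀ a ∈ F, c • a ∈ F) ∧
  (∀ a ∈ Pcone, ∀ b ∈ Pcone, a + b ∈ F → a ∈ F ∧ b ∈ F)

/-- `J_F = {q ∈ H₂ : q² ∈ F}`. -/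
def Jset (F : Set MvP) : Set MvP :=
  {q | q.IsHomogeneous 2 ∧ q ^ 2 ∈ F}

/-- The univariate polynomial `t ↦ f (p + t • v)`. -/
def lineP (p v : Fin 3 → ℝ) (f : MvP) : Polynomial ℝ :=
  MvPolynomial.aeval (fun i => Polynomial.C (p i) + Polynomial.C (v i) * Polynomial.X) f

/-- The face `F_p = {f ∈ P : f(p) = 0}`. -/
def Fp (p : Fin 3 → ℝ) : Set MvP := {f ∈ Pcone | eval p f = 0}

/-- The face `F_{(p,v)}`: members of `P` vanishing at `p` whose restriction to the line
`t ↦ p + t v` has vanishing `t²`-coefficient. -/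
def Fpv (p v : Fin 3 → ℝ) : Set MvP :=
  {f ∈ Pcone | eval p f = 0 ∧ (lineP p v f).coeff 2 = 0}

/-- The gradient `∇f(p)`. -/
def grad (f : MvP) (p : Fin 3 → ℝ) : Fin 3 → ℝ := fun i => eval p (pderiv i f)

/-- The Hessian matrix `(Hess f)(p)`. -/
def hess (f : MvP) (p : Fin 3 → ℝ) : Matrix (Fin 3) (Fin 3) ℝ :=
  Matrix.of fun i j => eval p (pderiv i (pderiv j f))

/-- `I_p = {f ∈ H₄ : f(p) = 0, ∇f(p) = 0}`. -/
def Ip (p : Fin 3 → ℝ) : Set MvP :=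
  {f | f.IsHomogeneous 4 ∧ eval p f = 0 ∧ grad f p = 0}

/-- `I_{(p,v)}`. -/
def Ipv (p v : Fin 3 → ℝ) : Set MvP :=
  {f | f.IsHomogeneous 4 ∧ eval p f = 0 ∧ grad f p = 0 ∧
    (hess f p).mulVec v = 0 ∧ (lineP p v f).coeff 3 = 0}

/-- The four points `e₁, e₂, e₃, e₄`. -/
def ePts : Fin 4 → Fin 3 → ℝ := ![![1,0,0], ![0,1,0], ![0,0,1], ![1,1,1]]

/-- The face `F_{S₄}` of quartics in `P` vanishing at `e₁, e₂, e₃, e₄`. -/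
def FS4 : Set MvP := {f ∈ Pcone | ∀ i : Fin 4, eval (ePts i) f = 0}

/-- `I_{S₄}`: quartic forms vanishing to second order at `e₁, e₂, e₃, e₄`. -/
def IS4 : Set MvP :=
  {f : MvP | f.IsHomogeneous 4 ∧ ∀ i : Fin 4, eval (ePts i) f = 0 ∧ grad f (ePts i) = 0}

/-! ### Auxiliary machinery -/

/-- The exponent vector `x^a y^b z^c`. -/
def m (a b c : ℕ) : Fin 3 →₀ ℕ := Finsupp.single 0 a + Finsupp.single 1 b + Finsupp.single 2 c

lemma m_apply0 (a b c : ℕ) : m a b c 0 = a := by simp [m, Finsupp.single_apply]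
lemma m_apply1 (a b c : ℕ) : m a b c 1 = b := by simp [m, Finsupp.single_apply]
lemma m_apply2 (a b c : ℕ) : m a b c 2 = c := by simp [m, Finsupp.single_apply]

lemma m_inj {a b c a' b' c' : ℕ} : m a b c = m a' b' c' ↔ a = a' ∧ b = b' ∧ c = c' := by
  constructor
  · intro h
    refine ⟨?_, ?_, ?_⟩
    · have := DFunLike.congr_fun h 0; simpa [m_apply0] using this
    · have := DFunLike.congr_fun h 1; simpa [m_apply1] using this
    · have := DFunLike.congr_fun h 2; simpa [m_apply2] using this
  · rintro ⟨rfl, rfl, rfl⟩; rfl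

lemma eq_m (d : Fin 3 →₀ ℕ) : d = m (d 0) (d 1) (d 2) := by
  ext i
  fin_cases i
  · simp [m_apply0]
  · simp [m_apply1]
  · simp [m_apply2]

lemma degree_m (d : Fin 3 →₀ ℕ) : Finsupp.degree d = d 0 + d 1 + d 2 := by
  rw [Finsupp.degree]
  rw [show (d 0 + d 1 + d 2) = ∑ i : Fin 3, d i by simp [Fin.sum_univ_three]]
  exact Finset.sum_subset (Finset.subset_univ d.support)
    (fun x _ hx => Finsupp.notMem_support_iff.mp hx)

lemma monomial_eq_smul (a b c : ℕ) (r : ℝ) :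
    (monomial (m a b c) r : MvP) = r • (X 0 ^ a * X 1 ^ b * X 2 ^ c) := by
  rw [smul_eq_C_mul, X_pow_eq_monomial, X_pow_eq_monomial, X_pow_eq_monomial, C_apply,
    monomial_mul, monomial_mul, monomial_mul]
  simp [m]

/-- A nonnegative univariate polynomial (of degree ≤ 4) vanishing at `0` has vanishing
linear coefficient. -/
lemma key (c0 c1 c2 c3 c4 : ℝ)
    (h : ∀ t : ℝ, 0 ≤ c0 + c1 * t + c2 * t ^ 2 + c3 * t ^ 3 + c4 * t ^ 4)
    (h0 : c0 = 0) : c1 = 0 := by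
  set q : Polynomial ℝ := Polynomial.C c0 + Polynomial.C c1 * Polynomial.X
      + Polynomial.C c2 * Polynomial.X ^ 2 + Polynomial.C c3 * Polynomial.X ^ 3
      + Polynomial.C c4 * Polynomial.X ^ 4 with hq
  have hev : ∀ t : ℝ, q.eval t = c0 + c1 * t + c2 * t ^ 2 + c3 * t ^ 3 + c4 * t ^ 4 := by
    intro t; simp [hq]
  have hmin : IsLocalMin (fun t => q.eval t) 0 := by
    apply Filter.Eventually.of_forall
    intro t
    simp only [hev, h0]
    have h1 := h t
    have h2 := h 0
    rw [h0] at h1 h2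
    nlinarith [h t]
  have hd := Polynomial.hasDerivAt q 0
  have hz := hmin.hasDerivAt_eq_zero hd
  have hc1 : q.coeff 1 = 0 := by
    have hc : Polynomial.eval 0 q.derivative = q.derivative.coeff 0 := by
      rw [Polynomial.coeff_zero_eq_eval_zero]
    rw [hc] at hz
    simpa [Polynomial.coeff_derivative] using hz
  simpa [hq] using hc1

/-- Representation of a homogeneous quartic by its 15 coefficients. -/
lemma rep (f : MvP) (hf : f.IsHomogeneous 4) :
    f = (coeff (m 4 0 0) f) • (X 0 ^ 4 * X 1 ^ 0 * X 2 ^ 0)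
      + (coeff (m 3 1 0) f) • (X 0 ^ 3 * X 1 ^ 1 * X 2 ^ 0)
      + (coeff (m 3 0 1) f) • (X 0 ^ 3 * X 1 ^ 0 * X 2 ^ 1)
      + (coeff (m 2 2 0) f) • (X 0 ^ 2 * X 1 ^ 2 * X 2 ^ 0)
      + (coeff (m 2 1 1) f) • (X 0 ^ 2 * X 1 ^ 1 * X 2 ^ 1)
      + (coeff (m 2 0 2) f) • (X 0 ^ 2 * X 1 ^ 0 * X 2 ^ 2)
      + (coeff (m 1 3 0) f) • (X 0 ^ 1 * X 1 ^ 3 * X 2 ^ 0)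
      + (coeff (m 1 2 1) f) • (X 0 ^ 1 * X 1 ^ 2 * X 2 ^ 1)
      + (coeff (m 1 1 2) f) • (X 0 ^ 1 * X 1 ^ 1 * X 2 ^ 2)
      + (coeff (m 1 0 3) f) • (X 0 ^ 1 * X 1 ^ 0 * X 2 ^ 3)
      + (coeff (m 0 4 0) f) • (X 0 ^ 0 * X 1 ^ 4 * X 2 ^ 0)
      + (coeff (m 0 3 1) f) • (X 0 ^ 0 * X 1 ^ 3 * X 2 ^ 1)
      + (coeff (m 0 2 2) f) • (X 0 ^ 0 * X 1 ^ 2 * X 2 ^ 2)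
      + (coeff (m 0 1 3) f) • (X 0 ^ 0 * X 1 ^ 1 * X 2 ^ 3)
      + (coeff (m 0 0 4) f) • (X 0 ^ 0 * X 1 ^ 0 * X 2 ^ 4) := by
  apply MvPolynomial.ext
  intro d
  simp only [← monomial_eq_smul, coeff_add, coeff_monomial]
  by_cases hdeg : Finsupp.degree d = 4
  · obtain ⟨a, b, c, rfl⟩ : ∃ a b c, d = m a b c := ⟨d 0, d 1, d 2, eq_m d⟩
    rw [degree_m, m_apply0, m_apply1, m_apply2] at hdeg
    have ha : a ≤ 4 := by omega
    have hb : b ≤ 4 := by omega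
    have hc : c ≤ 4 := by omega
    simp only [m_inj]
    interval_cases a <;> interval_cases b <;> interval_cases c <;> simp at hdeg ⊢
  · rw [(hf.coeff_eq_zero hdeg : coeff d f = 0)]
    have h4 : ∀ a b c : ℕ, a + b + c = 4 → ¬ (m a b c = d) := by
      intro a b c h hEq
      apply hdeg
      rw [← hEq, degree_m, m_apply0, m_apply1, m_apply2, h]
    rw [if_neg (h4 4 0 0 (by norm_num)), if_neg (h4 3 1 0 (by norm_num)),
       if_neg (h4 3 0 1 (by norm_num)), if_neg (h4 2 2 0 (by norm_num)),
       if_neg (h4 2 1 1 (by norm_num)), if_neg (h4 2 0 2 (by norm_num)),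
       if_neg (h4 1 3 0 (by norm_num)), if_neg (h4 1 2 1 (by norm_num)),
       if_neg (h4 1 1 2 (by norm_num)), if_neg (h4 1 0 3 (by norm_num)),
       if_neg (h4 0 4 0 (by norm_num)), if_neg (h4 0 3 1 (by norm_num)),
       if_neg (h4 0 2 2 (by norm_num)), if_neg (h4 0 1 3 (by norm_num)),
       if_neg (h4 0 0 4 (by norm_num))]
    norm_num

section EvalLemmas

variable (f : MvP) (hf : f.IsHomogeneous 4) (t : ℝ)
include hf

lemma evA : eval ![(1 : ℝ), t, 0] f = (coeff (m 4 0 0) f) + (coeff (m 3 1 0) f) * t + (coeff (m 2 2 0) f) * t ^ 2 + (coeff (m 1 3 0) f) * t ^ 3 + (coeff (m 0 4 0) f) * t ^ 4 := by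
  conv_lhs => rw [rep f hf]
  simp [smul_eval]
  try ring

lemma evB : eval ![(1 : ℝ), 0, t] f = (coeff (m 4 0 0) f) + (coeff (m 3 0 1) f) * t + (coeff (m 2 0 2) f) * t ^ 2 + (coeff (m 1 0 3) f) * t ^ 3 + (coeff (m 0 0 4) f) * t ^ 4 := by
  conv_lhs => rw [rep f hf]
  simp [smul_eval]
  try ring

lemma evC : eval ![(t : ℝ), 1, 0] f = (coeff (m 0 4 0) f) + (coeff (m 1 3 0) f) * t + (coeff (m 2 2 0) f) * t ^ 2 + (coeff (m 3 1 0) f) * t ^ 3 + (coeff (m 4 0 0) f) * t ^ 4 := by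
  conv_lhs => rw [rep f hf]
  simp [smul_eval]
  try ring

lemma evD : eval ![(0 : ℝ), 1, t] f = (coeff (m 0 4 0) f) + (coeff (m 0 3 1) f) * t + (coeff (m 0 2 2) f) * t ^ 2 + (coeff (m 0 1 3) f) * t ^ 3 + (coeff (m 0 0 4) f) * t ^ 4 := by
  conv_lhs => rw [rep f hf]
  simp [smul_eval]
  try ring

lemma evE : eval ![(t : ℝ), 0, 1] f = (coeff (m 0 0 4) f) + (coeff (m 1 0 3) f) * t + (coeff (m 2 0 2) f) * t ^ 2 + (coeff (m 3 0 1) f) * t ^ 3 + (coeff (m 4 0 0) f) * t ^ 4 := by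
  conv_lhs => rw [rep f hf]
  simp [smul_eval]
  try ring

lemma evF : eval ![(0 : ℝ), t, 1] f = (coeff (m 0 0 4) f) + (coeff (m 0 1 3) f) * t + (coeff (m 0 2 2) f) * t ^ 2 + (coeff (m 0 3 1) f) * t ^ 3 + (coeff (m 0 4 0) f) * t ^ 4 := by
  conv_lhs => rw [rep f hf]
  simp [smul_eval]
  try ring

lemma evG : eval ![(1 + t : ℝ), 1, 1] f = (coeff (m 4 0 0) f + coeff (m 3 1 0) f + coeff (m 3 0 1) f + coeff (m 2 2 0) f + coeff (m 2 1 1) f + coeff (m 2 0 2) f + coeff (m 1 3 0) f + coeff (m 1 2 1) f + coeff (m 1 1 2) f + coeff (m 1 0 3) f + coeff (m 0 4 0) f + coeff (m 0 3 1) f + coeff (m 0 2 2) f + coeff (m 0 1 3) f + coeff (m 0 0 4) f) + (4 * coeff (m 4 0 0) f + 3 * coeff (m 3 1 0) f + 3 * coeff (m 3 0 1) f + 2 * coeff (m 2 2 0) f + 2 * coeff (m 2 1 1) f + 2 * coeff (m 2 0 2) f + coeff (m 1 3 0) f + coeff (m 1 2 1) f + coeff (m 1 1 2) f + coeff (m 1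 0 3) f) * t + (6 * coeff (m 4 0 0) f + 3 * coeff (m 3 1 0) f + 3 * coeff (m 3 0 1) f + coeff (m 2 2 0) f + coeff (m 2 1 1) f + coeff (m 2 0 2) f) * t ^ 2 + (4 * coeff (m 4 0 0) f + coeff (m 3 1 0) f + coeff (m 3 0 1) f) * t ^ 3 + (coeff (m 4 0 0) f) * t ^ 4 := by
  conv_lhs => rw [rep f hf]
  simp [smul_eval]
  try ring

lemma evH : eval ![(1 : ℝ), 1 + t, 1] f = (coeff (m 4 0 0) f + coeff (m 3 1 0) f + coeff (m 3 0 1) f + coeff (m 2 2 0) f + coeff (m 2 1 1) f + coeff (m 2 0 2) f + coeff (m 1 3 0) f + coeff (m 1 2 1) f + coeff (m 1 1 2) f + coeff (m 1 0 3) f + coeff (m 0 4 0) f + coeff (m 0 3 1) f + coeff (m 0 2 2) f + coeff (m 0 1 3) f + coeff (m 0 0 4) f) + (coeff (m 3 1 0) f + 2 * coeff (m 2 2 0) f + coeff (m 2 1 1) f + 3 * coeff (m 1 3 0) f + 2 * coeff (m 1 2 1) f + coeff (m 1 1 2) f + 4 * coeff (m 0 4 0) f + 3 * coeff (m 0 3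 1) f + 2 * coeff (m 0 2 2) f + coeff (m 0 1 3) f) * t + (coeff (m 2 2 0) f + 3 * coeff (m 1 3 0) f + coeff (m 1 2 1) f + 6 * coeff (m 0 4 0) f + 3 * coeff (m 0 3 1) f + coeff (m 0 2 2) f) * t ^ 2 + (coeff (m 1 3 0) f + 4 * coeff (m 0 4 0) f + coeff (m 0 3 1) f) * t ^ 3 + (coeff (m 0 4 0) f) * t ^ 4 := by
  conv_lhs => rw [rep f hf]
  simp [smul_eval]
  try ring

lemma evI : eval ![(1 : ℝ), 1, 1 + t] f = (coeff (m 4 0 0) f + coeff (m 3 1 0) f + coeff (m 3 0 1) f + coeff (m 2 2 0) f + coeff (m 2 1 1) f + coeff (m 2 0 2) f + coeff (m 1 3 0) f + coeff (m 1 2 1) f + coeff (m 1 1 2) f + coeff (m 1 0 3) f + coeff (m 0 4 0) f + coeff (m 0 3 1) f + coeff (m 0 2 2) f + coeff (m 0 1 3) f + coeff (m 0 0 4) f) + (coeff (m 3 0 1) f + coeff (m 2 1 1) f + 2 * coeff (m 2 0 2) f + coeff (m 1 2 1) f + 2 * coeff (m 1 1 2) f + 3 * coeff (m 1 0 3) f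 + coeff (m 0 3 1) f + 2 * coeff (m 0 2 2) f + 3 * coeff (m 0 1 3) f + 4 * coeff (m 0 0 4) f) * t + (coeff (m 2 0 2) f + coeff (m 1 1 2) f + 3 * coeff (m 1 0 3) f + coeff (m 0 2 2) f + 3 * coeff (m 0 1 3) f + 6 * coeff (m 0 0 4) f) * t ^ 2 + (coeff (m 1 0 3) f + coeff (m 0 1 3) f + 4 * coeff (m 0 0 4) f) * t ^ 3 + (coeff (m 0 0 4) f) * t ^ 4 := by
  conv_lhs => rw [rep f hf]
  simp [smul_eval]
  try ring

lemma evP1 : eval ![(1 : ℝ), 0, 0] f = coeff (m 4 0 0) f := by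
  conv_lhs => rw [rep f hf]
  simp [smul_eval]
  try ring

lemma evP2 : eval ![(0 : ℝ), 1, 0] f = coeff (m 0 4 0) f := by
  conv_lhs => rw [rep f hf]
  simp [smul_eval]
  try ring

lemma evP3 : eval ![(0 : ℝ), 0, 1] f = coeff (m 0 0 4) f := by
  conv_lhs => rw [rep f hf]
  simp [smul_eval]
  try ring

lemma evP4 : eval ![(1 : ℝ), 1, 1] f = coeff (m 4 0 0) f + coeff (m 3 1 0) f + coeff (m 3 0 1) f + coeff (m 2 2 0) f + coeff (m 2 1 1) f + coeff (m 2 0 2) f + coeff (m 1 3 0) f + coeff (m 1 2 1) f + coeff (m 1 1 2) f + coeff (m 1 0 3) f + coeff (m 0 4 0) f + coeff (m 0 3 1) f + coeff (m 0 2 2) f + coeff (m 0 1 3) f + coeff (m 0 0 4) f := by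
  conv_lhs => rw [rep f hf]
  simp [smul_eval]
  try ring

lemma pd10 : eval ![(1 : ℝ), 0, 0] (pderiv 0 f) = 4 * coeff (m 4 0 0) f := by
  conv_lhs => rw [rep f hf]
  simp [smul_eval, pderiv_mul, pderiv_pow, pderiv_X]
  try ring

lemma pd11 : eval ![(1 : ℝ), 0, 0] (pderiv 1 f) = coeff (m 3 1 0) f := by
  conv_lhs => rw [rep f hf]
  simp [smul_eval, pderiv_mul, pderiv_pow, pderiv_X]
  try ring

lemma pd12 : eval ![(1 : ℝ), 0, 0] (pderiv 2 f) = coeff (m 3 0 1) f := by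
  conv_lhs => rw [rep f hf]
  simp [smul_eval, pderiv_mul, pderiv_pow, pderiv_X]
  try ring

lemma pd20 : eval ![(0 : ℝ), 1, 0] (pderiv 0 f) = coeff (m 1 3 0) f := by
  conv_lhs => rw [rep f hf]
  simp [smul_eval, pderiv_mul, pderiv_pow, pderiv_X]
  try ring

lemma pd21 : eval ![(0 : ℝ), 1, 0] (pderiv 1 f) = 4 * coeff (m 0 4 0) f := by
  conv_lhs => rw [rep f hf]
  simp [smul_eval, pderiv_mul, pderiv_pow, pderiv_X]
  try ring

lemma pd22 : eval ![(0 : ℝ), 1, 0] (pderiv 2 f) = coeff (m 0 3 1) f := by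
  conv_lhs => rw [rep f hf]
  simp [smul_eval, pderiv_mul, pderiv_pow, pderiv_X]
  try ring

lemma pd30 : eval ![(0 : ℝ), 0, 1] (pderiv 0 f) = coeff (m 1 0 3) f := by
  conv_lhs => rw [rep f hf]
  simp [smul_eval, pderiv_mul, pderiv_pow, pderiv_X]
  try ring

lemma pd31 : eval ![(0 : ℝ), 0, 1] (pderiv 1 f) = coeff (m 0 1 3) f := by
  conv_lhs => rw [rep f hf]
  simp [smul_eval, pderiv_mul, pderiv_pow, pderiv_X]
  try ring

lemma pd32 : eval ![(0 : ℝ), 0, 1] (pderiv 2 f) = 4 * coeff (m 0 0 4) f := by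
  conv_lhs => rw [rep f hf]
  simp [smul_eval, pderiv_mul, pderiv_pow, pderiv_X]
  try ring

lemma pd40 : eval ![(1 : ℝ), 1, 1] (pderiv 0 f) = 4 * coeff (m 4 0 0) f + 3 * coeff (m 3 1 0) f + 3 * coeff (m 3 0 1) f + 2 * coeff (m 2 2 0) f + 2 * coeff (m 2 1 1) f + 2 * coeff (m 2 0 2) f + coeff (m 1 3 0) f + coeff (m 1 2 1) f + coeff (m 1 1 2) f + coeff (m 1 0 3) f := by
  conv_lhs => rw [rep f hf]
  simp [smul_eval, pderiv_mul, pderiv_pow, pderiv_X]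
  try ring

lemma pd41 : eval ![(1 : ℝ), 1, 1] (pderiv 1 f) = coeff (m 3 1 0) f + 2 * coeff (m 2 2 0) f + coeff (m 2 1 1) f + 3 * coeff (m 1 3 0) f + 2 * coeff (m 1 2 1) f + coeff (m 1 1 2) f + 4 * coeff (m 0 4 0) f + 3 * coeff (m 0 3 1) f + 2 * coeff (m 0 2 2) f + coeff (m 0 1 3) f := by
  conv_lhs => rw [rep f hf]
  simp [smul_eval, pderiv_mul, pderiv_pow, pderiv_X]
  try ring

lemma pd42 : eval ![(1 : ℝ), 1, 1] (pderiv 2 f) = coeff (m 3 0 1) f + coeff (m 2 1 1) f + 2 * coeff (m 2 0 2) f + coeff (m 1 2 1) f + 2 * coeff (m 1 1 2) f + 3 * coeff (m 1 0 3) f + coeff (m 0 3 1) f + 2 * coeff (m 0 2 2) f + 3 * coeff (m 0 1 3) f + 4 * coeff (m 0 0 4) f := by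
  conv_lhs => rw [rep f hf]
  simp [smul_eval, pderiv_mul, pderiv_pow, pderiv_X]
  try ring

end EvalLemmas


def q1 : MvP := X 0 * X 1 - X 1 * X 2
def q2 : MvP := X 0 * X 2 - X 1 * X 2
def f1 : MvP := q1 ^ 2
def f2 : MvP := q2 ^ 2
def f3 : MvP := (q1 + q2) ^ 2

lemma hf1exp : f1 = (1:ℝ) • (X 0 ^ 2 * X 1 ^ 2 * X 2 ^ 0) + (-2:ℝ) • (X 0 ^ 1 * X 1 ^ 2 * X 2 ^ 1)
    + (1:ℝ) • (X 0 ^ 0 * X 1 ^ 2 * X 2 ^ 2) := by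
  simp only [f1, q1, smul_eq_C_mul, map_neg, map_ofNat, map_one]
  ring

lemma hf2exp : f2 = (1:ℝ) • (X 0 ^ 2 * X 1 ^ 0 * X 2 ^ 2) + (-2:ℝ) • (X 0 ^ 1 * X 1 ^ 1 * X 2 ^ 2)
    + (1:ℝ) • (X 0 ^ 0 * X 1 ^ 2 * X 2 ^ 2) := by
  simp only [f2, q2, smul_eq_C_mul, map_neg, map_ofNat, map_one]
  ring

lemma hf3exp : f3 = (1:ℝ) • (X 0 ^ 2 * X 1 ^ 2 * X 2 ^ 0) + (1:ℝ) • (X 0 ^ 2 * X 1 ^ 0 * X 2 ^ 2)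
    + (4:ℝ) • (X 0 ^ 0 * X 1 ^ 2 * X 2 ^ 2) + (2:ℝ) • (X 0 ^ 2 * X 1 ^ 1 * X 2 ^ 1)
    + (-4:ℝ) • (X 0 ^ 1 * X 1 ^ 2 * X 2 ^ 1) + (-4:ℝ) • (X 0 ^ 1 * X 1 ^ 1 * X 2 ^ 2) := by
  simp only [f3, q1, q2, smul_eq_C_mul, map_neg, map_ofNat, map_one]
  ring

lemma q1_hom : q1.IsHomogeneous 2 := by
  have h : ((X 0 * X 1 : MvP) - X 1 * X 2).IsHomogeneous (1 + 1) :=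
    ((isHomogeneous_X _ _).mul (isHomogeneous_X _ _)).sub
      ((isHomogeneous_X _ _).mul (isHomogeneous_X _ _))
  simpa [q1] using h

lemma q2_hom : q2.IsHomogeneous 2 := by
  have h : ((X 0 * X 2 : MvP) - X 1 * X 2).IsHomogeneous (1 + 1) :=
    ((isHomogeneous_X _ _).mul (isHomogeneous_X _ _)).sub
      ((isHomogeneous_X _ _).mul (isHomogeneous_X _ _))
  simpa [q2] using h

lemma sq_mem_FS4 {q : MvP} (hq : q.IsHomogeneous 2)
    (hv : ∀ i : Fin 4, eval (ePts i) q = 0) : q ^ 2 ∈ FS4 := by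
  refine ⟨⟨by simpa using hq.pow 2, fun a => by rw [map_pow]; positivity⟩, fun i => by
    rw [map_pow, hv i]; norm_num⟩

lemma f1_mem : f1 ∈ FS4 := by
  apply sq_mem_FS4 q1_hom
  intro i
  fin_cases i <;> simp [ePts, q1]

lemma f2_mem : f2 ∈ FS4 := by
  apply sq_mem_FS4 q2_hom
  intro i
  fin_cases i <;> simp [ePts, q2]

lemma f3_mem : f3 ∈ FS4 := by
  apply sq_mem_FS4 (by simpa using q1_hom.add q2_hom)
  intro i
  fin_cases i <;> simp [ePts, q1, q2]

/-- `IS4` as a submodule. -/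
def IS4sub : Submodule ℝ MvP where
  carrier := IS4
  zero_mem' := by
    refine ⟨isHomogeneous_zero _ _ _, fun i => ⟨by simp, ?_⟩⟩
    funext j
    simp [grad]
  add_mem' := by
    rintro a b ⟨ha1, ha2⟩ ⟨hb1, hb2⟩
    refine ⟨ha1.add hb1, fun i => ⟨by rw [map_add, (ha2 i).1, (hb2 i).1, add_zero], ?_⟩⟩
    funext j
    have h1 := congrFun (ha2 i).2 j
    have h2 := congrFun (hb2 i).2 j
    simp only [grad, Pi.zero_apply, map_add] at h1 h2 ⊢
    rw [h1, h2, add_zero]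
  smul_mem' := by
    rintro r a ⟨ha1, ha2⟩
    refine ⟨by rw [smul_eq_C_mul]; exact ha1.C_mul r, fun i => ⟨by rw [smul_eval, (ha2 i).1, mul_zero], ?_⟩⟩
    funext j
    have h1 := congrFun (ha2 i).2 j
    simp only [grad, Pi.zero_apply] at h1 ⊢
    rw [(pderiv j).map_smul, smul_eval, h1, mul_zero]

lemma ePts0 : ePts 0 = ![(1:ℝ), 0, 0] := rfl
lemma ePts1 : ePts 1 = ![(0:ℝ), 1, 0] := rfl
lemma ePts2 : ePts 2 = ![(0:ℝ), 0, 1] := rfl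
lemma ePts3 : ePts 3 = ![(1:ℝ), 1, 1] := rfl

lemma FS4_sub_IS4 : FS4 ⊆ IS4 := by
  rintro f ⟨⟨hhom, hpos⟩, hvan⟩
  have hv0 := hvan 0
  rw [ePts0, evP1 f hhom] at hv0
  have hv1 := hvan 1
  rw [ePts1, evP2 f hhom] at hv1
  have hv2 := hvan 2
  rw [ePts2, evP3 f hhom] at hv2
  have hv3 := hvan 3
  rw [ePts3, evP4 f hhom] at hv3
  have E310 : coeff (m 3 1 0) f = 0 := by
    apply key (coeff (m 4 0 0) f) (coeff (m 3 1 0) f) (coeff (m 2 2 0) f) (coeff (m 1 3 0) f) (coeff (m 0 4 0) f) ?_ hv0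
    intro t
    rw [← evA f hhom t]
    exact hpos _
  have E301 : coeff (m 3 0 1) f = 0 := by
    apply key (coeff (m 4 0 0) f) (coeff (m 3 0 1) f) (coeff (m 2 0 2) f) (coeff (m 1 0 3) f) (coeff (m 0 0 4) f) ?_ hv0
    intro t
    rw [← evB f hhom t]
    exact hpos _
  have E130 : coeff (m 1 3 0) f = 0 := by
    apply key (coeff (m 0 4 0) f) (coeff (m 1 3 0) f) (coeff (m 2 2 0) f) (coeff (m 3 1 0) f) (coeff (m 4 0 0) f) ?_ hv1
    intro t
    rw [← evC f hhom t]
    exact hpos _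
  have E031 : coeff (m 0 3 1) f = 0 := by
    apply key (coeff (m 0 4 0) f) (coeff (m 0 3 1) f) (coeff (m 0 2 2) f) (coeff (m 0 1 3) f) (coeff (m 0 0 4) f) ?_ hv1
    intro t
    rw [← evD f hhom t]
    exact hpos _
  have E103 : coeff (m 1 0 3) f = 0 := by
    apply key (coeff (m 0 0 4) f) (coeff (m 1 0 3) f) (coeff (m 2 0 2) f) (coeff (m 3 0 1) f) (coeff (m 4 0 0) f) ?_ hv2
    intro t
    rw [← evE f hhom t]
    exact hpos _
  have E013 : coeff (m 0 1 3) f = 0 := by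
    apply key (coeff (m 0 0 4) f) (coeff (m 0 1 3) f) (coeff (m 0 2 2) f) (coeff (m 0 3 1) f) (coeff (m 0 4 0) f) ?_ hv2
    intro t
    rw [← evF f hhom t]
    exact hpos _
  have ED1 : 4 * coeff (m 4 0 0) f + 3 * coeff (m 3 1 0) f + 3 * coeff (m 3 0 1) f + 2 * coeff (m 2 2 0) f + 2 * coeff (m 2 1 1) f + 2 * coeff (m 2 0 2) f + coeff (m 1 3 0) f + coeff (m 1 2 1) f + coeff (m 1 1 2) f + coeff (m 1 0 3) f = 0 := by
    apply key (coeff (m 4 0 0) f + coeff (m 3 1 0) f + coeff (m 3 0 1) f + coeff (m 2 2 0) f + coeff (m 2 1 1) f + coeff (m 2 0 2) f + coeff (m 1 3 0) f + coeff (m 1 2 1) f + coeff (m 1 1 2) f + coeff (m 1 0 3) f + coeff (m 0 4 0) f + coeff (m 0 3 1) f + coeff (m 0 2 2) f + coeff (m 0 1 3) f + coeff (m 0 0 4) f) (4 * coeff (m 4 0 0) f + 3 * coeff (m 3 1 0) f + 3 * coeff (m 3 0 1) f + 2 * coeff (m 2 2 0) f + 2 * coeff (m 2 1 1) f + 2 *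 coeff (m 2 0 2) f + coeff (m 1 3 0) f + coeff (m 1 2 1) f + coeff (m 1 1 2) f + coeff (m 1 0 3) f) (6 * coeff (m 4 0 0) f + 3 * coeff (m 3 1 0) f + 3 * coeff (m 3 0 1) f + coeff (m 2 2 0) f + coeff (m 2 1 1) f + coeff (m 2 0 2) f) (4 * coeff (m 4 0 0) f + coeff (m 3 1 0) f + coeff (m 3 0 1) f) (coeff (m 4 0 0) f) ?_ hv3
    intro t
    rw [← evG f hhom t]
    exact hpos _
  have ED2 : coeff (m 3 1 0) f + 2 * coeff (m 2 2 0) f + coeff (m 2 1 1) f + 3 * coeff (m 1 3 0) f + 2 * coeff (m 1 2 1) f + coeff (m 1 1 2) f + 4 * coeff (m 0 4 0) f + 3 * coeff (m 0 3 1) f + 2 * coeff (m 0 2 2) f + coeff (m 0 1 3) f = 0 := by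
    apply key (coeff (m 4 0 0) f + coeff (m 3 1 0) f + coeff (m 3 0 1) f + coeff (m 2 2 0) f + coeff (m 2 1 1) f + coeff (m 2 0 2) f + coeff (m 1 3 0) f + coeff (m 1 2 1) f + coeff (m 1 1 2) f + coeff (m 1 0 3) f + coeff (m 0 4 0) f + coeff (m 0 3 1) f + coeff (m 0 2 2) f + coeff (m 0 1 3) f + coeff (m 0 0 4) f) (coeff (m 3 1 0) f + 2 * coeff (m 2 2 0) f + coeff (m 2 1 1) f + 3 * coeff (m 1 3 0) f + 2 * coeff (m 1 2 1) f + coeff (m 1 1 2) f + 4 * coeff (m 0 4 0) f + 3 * coeff (m 0 3 1) f + 2 * coeff (m 0 2 2) f + coeff (m 0 1 3) f) (coeff (m 2 2 0) f + 3 * coeff (m 1 3 0) f + coeff (m 1 2 1) f + 6 * coeff (m 0 4 0) f + 3 * coeff (m 0 3 1) f + coeff (m 0 2 2) f) (coeff (m 1 3 0) f + 4 * coeff (m 0 4 0) f + coeff (m 0 3 1) f) (coeff (m 0 4 0) f) ?_ hv3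
    intro t
    rw [← evH f hhom t]
    exact hpos _
  have ED3 : coeff (m 3 0 1) f + coeff (m 2 1 1) f + 2 * coeff (m 2 0 2) f + coeff (m 1 2 1) f + 2 * coeff (m 1 1 2) f + 3 * coeff (m 1 0 3) f + coeff (m 0 3 1) f + 2 * coeff (m 0 2 2) f + 3 * coeff (m 0 1 3) f + 4 * coeff (m 0 0 4) f = 0 := by
    apply key (coeff (m 4 0 0) f + coeff (m 3 1 0) f + coeff (m 3 0 1) f + coeff (m 2 2 0) f + coeff (m 2 1 1) f + coeff (m 2 0 2) f + coeff (m 1 3 0) f + coeff (m 1 2 1) f + coeff (m 1 1 2) f + coeff (m 1 0 3) f + coeff (m 0 4 0) f + coeff (m 0 3 1) f + coeff (m 0 2 2) f + coeff (m 0 1 3) f + coeff (m 0 0 4) f) (coeff (m 3 0 1) f + coeff (m 2 1 1) f + 2 * coeff (m 2 0 2) f + coeff (m 1 2 1) f + 2 * coeff (m 1 1 2) f + 3 * coeff (m 1 0 3) f + coeff (m 0 3 1) f + 2 * coeff (m 0 2 2) f + 3 * coeff (m 0 1 3) f + 4 * coeff (m 0 0 4) f) (coeff (m 2 0 2) f +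 coeff (m 1 1 2) f + 3 * coeff (m 1 0 3) f + coeff (m 0 2 2) f + 3 * coeff (m 0 1 3) f + 6 * coeff (m 0 0 4) f) (coeff (m 1 0 3) f + coeff (m 0 1 3) f + 4 * coeff (m 0 0 4) f) (coeff (m 0 0 4) f) ?_ hv3
    intro t
    rw [← evI f hhom t]
    exact hpos _
  refine ⟨hhom, fun i => ⟨hvan i, ?_⟩⟩
  fin_cases i
  · funext j
    fin_cases j
    · show eval (ePts 0) (pderiv 0 f) = (0:ℝ)
      rw [ePts0, pd10 f hhom]; linarith
    · show eval (ePts 0) (pderiv 1 f) = (0:ℝ)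
      rw [ePts0, pd11 f hhom]; linarith
    · show eval (ePts 0) (pderiv 2 f) = (0:ℝ)
      rw [ePts0, pd12 f hhom]; linarith
  · funext j
    fin_cases j
    · show eval (ePts 1) (pderiv 0 f) = (0:ℝ)
      rw [ePts1, pd20 f hhom]; linarith
    · show eval (ePts 1) (pderiv 1 f) = (0:ℝ)
      rw [ePts1, pd21 f hhom]; linarith
    · show eval (ePts 1) (pderiv 2 f) = (0:ℝ)
      rw [ePts1, pd22 f hhom]; linarith
  · funext j
    fin_cases j
    · show eval (ePts 2) (pderiv 0 f) = (0:ℝ)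
      rw [ePts2, pd30 f hhom]; linarith
    · show eval (ePts 2) (pderiv 1 f) = (0:ℝ)
      rw [ePts2, pd31 f hhom]; linarith
    · show eval (ePts 2) (pderiv 2 f) = (0:ℝ)
      rw [ePts2, pd32 f hhom]; linarith
  · funext j
    fin_cases j
    · show eval (ePts 3) (pderiv 0 f) = (0:ℝ)
      rw [ePts3, pd40 f hhom]; linarith
    · show eval (ePts 3) (pderiv 1 f) = (0:ℝ)
      rw [ePts3, pd41 f hhom]; linarith
    · show eval (ePts 3) (pderiv 2 f) = (0:ℝ)
      rw [ePts3, pd42 f hhom]; linarith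


lemma IS4_sub_span : IS4 ⊆ (Submodule.span ℝ {f1, f2, f3} : Submodule ℝ MvP) := by
  rintro f ⟨hhom, hcond⟩
  have hv0 := (hcond 0).1
  rw [ePts0, evP1 f hhom] at hv0
  have hv1 := (hcond 1).1
  rw [ePts1, evP2 f hhom] at hv1
  have hv2 := (hcond 2).1
  rw [ePts2, evP3 f hhom] at hv2
  have E310 : coeff (m 3 1 0) f = 0 := by
    have h := congrFun (hcond 0).2 1
    rw [ePts0] at h
    simp only [grad, Pi.zero_apply] at h
    rwa [pd11 f hhom] at h
  have E301 : coeff (m 3 0 1) f = 0 := by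
    have h := congrFun (hcond 0).2 2
    rw [ePts0] at h
    simp only [grad, Pi.zero_apply] at h
    rwa [pd12 f hhom] at h
  have E130 : coeff (m 1 3 0) f = 0 := by
    have h := congrFun (hcond 1).2 0
    rw [ePts1] at h
    simp only [grad, Pi.zero_apply] at h
    rwa [pd20 f hhom] at h
  have E031 : coeff (m 0 3 1) f = 0 := by
    have h := congrFun (hcond 1).2 2
    rw [ePts1] at h
    simp only [grad, Pi.zero_apply] at h
    rwa [pd22 f hhom] at h
  have E103 : coeff (m 1 0 3) f = 0 := by
    have h := congrFun (hcond 2).2 0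
    rw [ePts2] at h
    simp only [grad, Pi.zero_apply] at h
    rwa [pd30 f hhom] at h
  have E013 : coeff (m 0 1 3) f = 0 := by
    have h := congrFun (hcond 2).2 1
    rw [ePts2] at h
    simp only [grad, Pi.zero_apply] at h
    rwa [pd31 f hhom] at h
  have ED1 := congrFun (hcond 3).2 0
  rw [ePts3] at ED1
  simp only [grad, Pi.zero_apply] at ED1
  rw [pd40 f hhom] at ED1
  have ED2 := congrFun (hcond 3).2 1
  rw [ePts3] at ED2
  simp only [grad, Pi.zero_apply] at ED2
  rw [pd41 f hhom] at ED2
  have ED3 := congrFun (hcond 3).2 2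
  rw [ePts3] at ED3
  simp only [grad, Pi.zero_apply] at ED3
  rw [pd42 f hhom] at ED3
  have h211 : coeff (m 2 1 1) f = coeff (m 0 2 2) f - coeff (m 2 2 0) f - coeff (m 2 0 2) f := by
    linarith
  have h121 : coeff (m 1 2 1) f = - coeff (m 2 2 0) f + coeff (m 2 0 2) f - coeff (m 0 2 2) f := by
    linarith
  have h112 : coeff (m 1 1 2) f = coeff (m 2 2 0) f - coeff (m 2 0 2) f - coeff (m 0 2 2) f := by
    linarith
  have hdecomp : f = ((3 * coeff (m 2 2 0) f + coeff (m 2 0 2) f - coeff (m 0 2 2) f)/2) • f1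
      + ((coeff (m 2 2 0) f + 3 * coeff (m 2 0 2) f - coeff (m 0 2 2) f)/2) • f2
      + ((coeff (m 0 2 2) f - coeff (m 2 2 0) f - coeff (m 2 0 2) f)/2) • f3 := by
    conv_lhs => rw [rep f hhom]
    rw [hv0, hv1, hv2, E310, E301, E130, E031, E103, E013, h211, h121, h112,
      hf1exp, hf2exp, hf3exp]
    module
  rw [hdecomp]
  have m1 : f1 ∈ (Submodule.span ℝ {f1, f2, f3} : Submodule ℝ MvP) :=
    Submodule.subset_span (by simp)
  have m2 : f2 ∈ (Submodule.span ℝ {f1, f2, f3} : Submodule ℝ MvP) :=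
    Submodule.subset_span (by simp)
  have m3 : f3 ∈ (Submodule.span ℝ {f1, f2, f3} : Submodule ℝ MvP) :=
    Submodule.subset_span (by simp)
  exact Submodule.add_mem _ (Submodule.add_mem _ (Submodule.smul_mem _ _ m1)
    (Submodule.smul_mem _ _ m2)) (Submodule.smul_mem _ _ m3)

lemma coeff_f1_220 : coeff (m 2 2 0) f1 = 1 := by
  rw [hf1exp]
  simp only [← monomial_eq_smul, coeff_add, coeff_monomial]
  norm_num [m_inj]

lemma coeff_f1_202 : coeff (m 2 0 2) f1 = 0 := by
  rw [hf1exp]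
  simp only [← monomial_eq_smul, coeff_add, coeff_monomial]
  norm_num [m_inj]

lemma coeff_f1_211 : coeff (m 2 1 1) f1 = 0 := by
  rw [hf1exp]
  simp only [← monomial_eq_smul, coeff_add, coeff_monomial]
  norm_num [m_inj]

lemma coeff_f2_220 : coeff (m 2 2 0) f2 = 0 := by
  rw [hf2exp]
  simp only [← monomial_eq_smul, coeff_add, coeff_monomial]
  norm_num [m_inj]

lemma coeff_f2_202 : coeff (m 2 0 2) f2 = 1 := by
  rw [hf2exp]
  simp only [← monomial_eq_smul, coeff_add, coeff_monomial]
  norm_num [m_inj]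

lemma coeff_f2_211 : coeff (m 2 1 1) f2 = 0 := by
  rw [hf2exp]
  simp only [← monomial_eq_smul, coeff_add, coeff_monomial]
  norm_num [m_inj]

lemma coeff_f3_220 : coeff (m 2 2 0) f3 = 1 := by
  rw [hf3exp]
  simp only [← monomial_eq_smul, coeff_add, coeff_monomial]
  norm_num [m_inj]

lemma coeff_f3_202 : coeff (m 2 0 2) f3 = 1 := by
  rw [hf3exp]
  simp only [← monomial_eq_smul, coeff_add, coeff_monomial]
  norm_num [m_inj]

lemma coeff_f3_211 : coeff (m 2 1 1) f3 = 2 := by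
  rw [hf3exp]
  simp only [← monomial_eq_smul, coeff_add, coeff_monomial]
  norm_num [m_inj]

lemma f_li : LinearIndependent ℝ ![f1, f2, f3] := by
  rw [Fintype.linearIndependent_iff]
  intro g hg
  rw [Fin.sum_univ_three] at hg
  simp only [Matrix.cons_val_zero, Matrix.cons_val_one, Matrix.head_cons,
    Matrix.cons_val_two, Matrix.tail_cons] at hg
  have h220 := congrArg (coeff (m 2 2 0)) hg
  have h202 := congrArg (coeff (m 2 0 2)) hg
  have h211 := congrArg (coeff (m 2 1 1)) hg
  simp only [coeff_add, MvPolynomial.coeff_smul, coeff_f1_220, coeff_f1_202, coeff_f1_211,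
    coeff_f2_220, coeff_f2_202, coeff_f2_211, coeff_f3_220, coeff_f3_202, coeff_f3_211,
    coeff_zero, smul_eq_mul, mul_zero, mul_one, add_zero, zero_add] at h220 h202 h211
  intro i
  fin_cases i
  · show g 0 = 0; linarith
  · show g 1 = 0; linarith
  · show g 2 = 0; linarith

lemma span_FS4_eq : Submodule.span ℝ FS4 = Submodule.span ℝ {f1, f2, f3} := by
  apply le_antisymm
  · rw [Submodule.span_le]
    intro f hfmem
    exact IS4_sub_span (FS4_sub_IS4 hfmem)
  · rw [Submodule.span_le]
    rintro f hfmem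
    simp only [Set.mem_insert_iff, Set.mem_singleton_iff] at hfmem
    rcases hfmem with rfl | rfl | rfl
    · exact Submodule.subset_span f1_mem
    · exact Submodule.subset_span f2_mem
    · exact Submodule.subset_span f3_mem

lemma span_triple_le_IS4 : (Submodule.span ℝ {f1, f2, f3} : Submodule ℝ MvP) ≤ IS4sub := by
  rw [Submodule.span_le]
  rintro f hfmem
  simp only [Set.mem_insert_iff, Set.mem_singleton_iff] at hfmem
  rcases hfmem with rfl | rfl | rfl
  · exact FS4_sub_IS4 f1_mem
  · exact FS4_sub_IS4 f2_mem
  · exact FS4_sub_IS4 f3_mem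

/-- `span(F_{S₄}) = I_{S₄}`, and this space has dimension 3. -/
theorem stmt_12 :
    (Submodule.span ℝ FS4 : Set MvP) = IS4 ∧
    Module.finrank ℝ ↥(Submodule.span ℝ FS4) = 3 := by
  constructor
  · apply Set.Subset.antisymm
    · intro f hfmem
      rw [span_FS4_eq] at hfmem
      exact span_triple_le_IS4 hfmem
    · intro f hfmem
      rw [SetLike.mem_coe, span_FS4_eq]
      exact IS4_sub_span hfmem
  · have hrange : Set.range ![f1, f2, f3] = {f1, f2, f3} := by
      ext x
      simp [Matrix.range_cons, Matrix.range_empty]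
      tauto
    rw [span_FS4_eq, ← hrange, finrank_span_eq_card f_li]
    simp
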